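/- arXiv:1509.05444 — 2 statements merged into one kernel-verified Lean document; each statement's English description precedes it below -/
import Mathlib

section
/- There exists R₀ > 1 such that for all R > R₀ and every w ∈ V⁺, writing H⁻ⁿ(w) = (xₙ,yₙ,zₙ): |zₙ| → ∞, xₙ/zₙ → 0 and yₙ/zₙ → 0 as n → ∞; equivalently, the backward orbit H⁻ⁿ(w) converges in complex projective 3-space ℙ³ (under the embedding (x,y,z) ↦ [x:y:z:1]) to the point [0:0:1:0]. -/
open Complex Filter Topology

/-- The quadratic automorphism `H(x,y,z) = (xy + az, x² + by, x)` of `ℂ³`. -/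
noncomputable def H (a b : ℂ) (w : ℂ × ℂ × ℂ) : ℂ × ℂ × ℂ :=
  (w.1 * w.2.1 + a * w.2.2, w.1 ^ 2 + b * w.2.1, w.1)

/-- The inverse automorphism
`H⁻¹(x,y,z) = (z, (y − z²)/b, (x − z(y − z²)/b)/a)`. -/
noncomputable def Hinv (a b : ℂ) (w : ℂ × ℂ × ℂ) : ℂ × ℂ × ℂ :=
  (w.2.2, (w.2.1 - w.2.2 ^ 2) / b,
    (w.1 - w.2.2 * ((w.2.1 - w.2.2 ^ 2) / b)) / a)

/-- `V⁺ = {(x,y,z) : |z| > max{R, |x|, (1+δ)|y|^{1/2}}}`. -/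
def Vplus (δ R : ℝ) : Set (ℂ × ℂ × ℂ) :=
  {w | ‖w.2.2‖ >
    max R (max ‖w.1‖ ((1 + δ) * Real.sqrt ‖w.2.1‖))}

/-- `U⁻ = ⋃_{n≥0} Hⁿ(V⁺)`. -/
noncomputable def Uminus (a b : ℂ) (δ R : ℝ) : Set (ℂ × ℂ × ℂ) :=
  ⋃ n : ℕ, (H a b)^[n] '' Vplus δ R

/-- `K⁻ = ℂ³ \ U⁻`. -/
noncomputable def Kminus (a b : ℂ) (δ R : ℝ) : Set (ℂ × ℂ × ℂ) :=
  (Uminus a b δ R)ᶜ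

/-!
Write `H⁻¹(x, y, z) = (z, y', z')`. On `V⁺` we have `|y| < |z|²/|b|²`, so
`|y'| = |z² - y|/|b|` is comparable to `|z|²`, and then `|a| |z'| = |x - z y'|` is
comparable to `|z|³` because `|x| < |z|`. For `R` large this cubic growth keeps the
backward orbit in `V⁺` and makes `|zₙ|` grow at least geometrically, while
`|xₙ₊₁/zₙ₊₁| = |zₙ/zₙ₊₁| ≲ |zₙ|⁻²` and `|yₙ₊₁/zₙ₊₁| ≲ |zₙ|²/|zₙ|³`.
-/

/-- `|y'| ≥ gain |b| · |z|²` as soon as `|b|² |y| ≤ |z|²`, since then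
`|z² - y| ≥ (1 - |b|⁻²) |z|²`. -/
noncomputable def gain (β : ℝ) : ℝ := (β ^ 2 - 1) / β ^ 3

lemma gain_pos {β : ℝ} (hβ : 1 < β) : 0 < gain β :=
  div_pos (by nlinarith) (by positivity)

section

variable {a b : ℂ} {δ R : ℝ} {w : ℂ × ℂ × ℂ}

lemma mem_Vplus_iff (hδ : -1 ≤ δ) :
    w ∈ Vplus δ R ↔
      R < ‖w.2.2‖ ∧ ‖w.1‖ < ‖w.2.2‖ ∧ (1 + δ) ^ 2 * ‖w.2.1‖ < ‖w.2.2‖ ^ 2 := by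
  have hsq : (1 + δ) ^ 2 * ‖w.2.1‖ = ((1 + δ) * Real.sqrt ‖w.2.1‖) ^ 2 := by
    rw [mul_pow, Real.sq_sqrt (norm_nonneg _)]
  have hnn : 0 ≤ (1 + δ) * Real.sqrt ‖w.2.1‖ :=
    mul_nonneg (by linarith) (Real.sqrt_nonneg _)
  simp only [Vplus, Set.mem_ofPred_eq, gt_iff_lt, max_lt_iff, hsq,
    pow_lt_pow_iff_left₀ hnn (norm_nonneg _) two_ne_zero]

lemma norm_Hinv_snd_le (hb : 1 ≤ ‖b‖) (hy : ‖w.2.1‖ ≤ ‖w.2.2‖ ^ 2) :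
    ‖(Hinv a b w).2.1‖ ≤ 2 * ‖w.2.2‖ ^ 2 := by
  have hnum : ‖w.2.1 - w.2.2 ^ 2‖ ≤ 2 * ‖w.2.2‖ ^ 2 := by
    calc ‖w.2.1 - w.2.2 ^ 2‖ ≤ ‖w.2.1‖ + ‖w.2.2‖ ^ 2 := by
          rw [← norm_pow]; exact norm_sub_le _ _
      _ ≤ 2 * ‖w.2.2‖ ^ 2 := by linarith
  simp only [Hinv, norm_div]
  rw [div_le_iff₀ (by linarith)]
  nlinarith [norm_nonneg (w.2.1 - w.2.2 ^ 2)]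

lemma gain_mul_le_norm_Hinv_snd (hb : b ≠ 0) (hy : ‖b‖ ^ 2 * ‖w.2.1‖ ≤ ‖w.2.2‖ ^ 2) :
    gain ‖b‖ * ‖w.2.2‖ ^ 2 ≤ ‖(Hinv a b w).2.1‖ := by
  have hβ : 0 < ‖b‖ := norm_pos_iff.mpr hb
  have hnum : ‖w.2.2‖ ^ 2 - ‖w.2.1‖ ≤ ‖w.2.1 - w.2.2 ^ 2‖ := by
    rw [← norm_pow, norm_sub_rev]; exact norm_sub_norm_le _ _
  have hscaled : (‖b‖ ^ 2 - 1) * ‖w.2.2‖ ^ 2 ≤ ‖w.2.1 - w.2.2 ^ 2‖ * ‖b‖ ^ 2 := by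
    nlinarith [mul_le_mul_of_nonneg_left hnum (sq_nonneg ‖b‖)]
  simp only [Hinv, norm_div, gain]
  rw [div_mul_eq_mul_div, div_le_div_iff₀ (by positivity) hβ]
  nlinarith [mul_le_mul_of_nonneg_right hscaled hβ.le]

lemma mul_pow_three_le_norm_Hinv_thd (ha : a ≠ 0) {c : ℝ} (hx : ‖w.1‖ ≤ ‖w.2.2‖)
    (hy : c * ‖w.2.2‖ ^ 2 ≤ ‖(Hinv a b w).2.1‖) (hc : 2 ≤ c * ‖w.2.2‖ ^ 2) :
    c * ‖w.2.2‖ ^ 3 ≤ 2 * ‖a‖ * ‖(Hinv a b w).2.2‖ := by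
  have hnum : ‖w.2.2‖ * ‖(Hinv a b w).2.1‖ - ‖w.1‖ ≤
      ‖w.1 - w.2.2 * (Hinv a b w).2.1‖ := by
    simpa only [norm_sub_rev, norm_mul] using
      norm_sub_norm_le (w.2.2 * (Hinv a b w).2.1) w.1
  have hz' : ‖a‖ * ‖(Hinv a b w).2.2‖ = ‖w.1 - w.2.2 * (Hinv a b w).2.1‖ := by
    change ‖a‖ * ‖(w.1 - w.2.2 * (Hinv a b w).2.1) / a‖ = _
    rw [norm_div, mul_div_cancel₀ _ (norm_ne_zero_iff.mpr ha)]
  nlinarith [norm_nonneg w.2.2, mul_le_mul_of_nonneg_left hy (norm_nonneg w.2.2)]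

lemma gain_mul_pow_three_le_of_mem_Vplus (ha : a ≠ 0) (hb : ‖b‖ = 1 + δ) (hδ : 0 < δ)
    (hR0 : 0 ≤ R) (hR : 2 ≤ gain (1 + δ) * R ^ 2) (hw : w ∈ Vplus δ R) :
    gain (1 + δ) * ‖w.2.2‖ ^ 3 ≤ 2 * ‖a‖ * ‖(Hinv a b w).2.2‖ := by
  obtain ⟨hzR, hx, hy⟩ := (mem_Vplus_iff (by linarith)).mp hw
  have hb0 : b ≠ 0 := norm_pos_iff.mp (by linarith)
  have hy' : gain (1 + δ) * ‖w.2.2‖ ^ 2 ≤ ‖(Hinv a b w).2.1‖ := by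
    rw [← hb]; exact gain_mul_le_norm_Hinv_snd hb0 (by rw [hb]; exact hy.le)
  refine mul_pow_three_le_norm_Hinv_thd ha hx.le hy' ?_
  exact hR.trans (mul_le_mul_of_nonneg_left (pow_le_pow_left₀ hR0 hzR.le 2)
    (gain_pos (by linarith : 1 < 1 + δ)).le)

lemma norm_Hinv_fst_div_thd_le {c : ℝ} (hc : 0 < c) (hz : 0 < ‖w.2.2‖)
    (hcubic : c * ‖w.2.2‖ ^ 3 ≤ 2 * ‖a‖ * ‖(Hinv a b w).2.2‖) :
    ‖(Hinv a b w).1 / (Hinv a b w).2.2‖ ≤ 2 * ‖a‖ / (c * ‖w.2.2‖ ^ 2) := by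
  have hz' : 0 < ‖(Hinv a b w).2.2‖ :=
    pos_of_mul_pos_right ((by positivity : 0 < c * ‖w.2.2‖ ^ 3).trans_le hcubic) (by positivity)
  rw [norm_div, div_le_div_iff₀ hz' (by positivity)]
  change ‖w.2.2‖ * _ ≤ _
  nlinarith

lemma norm_Hinv_snd_div_thd_le {c : ℝ} (hc : 0 < c) (hz : 0 < ‖w.2.2‖)
    (hcubic : c * ‖w.2.2‖ ^ 3 ≤ 2 * ‖a‖ * ‖(Hinv a b w).2.2‖)
    (hy : ‖(Hinv a b w).2.1‖ ≤ 2 * ‖w.2.2‖ ^ 2) :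
    ‖(Hinv a b w).2.1 / (Hinv a b w).2.2‖ ≤ 4 * ‖a‖ / (c * ‖w.2.2‖) := by
  have hz' : 0 < ‖(Hinv a b w).2.2‖ :=
    pos_of_mul_pos_right ((by positivity : 0 < c * ‖w.2.2‖ ^ 3).trans_le hcubic) (by positivity)
  rw [norm_div, div_le_div_iff₀ hz' (by positivity)]
  nlinarith [mul_le_mul_of_nonneg_right hy (by positivity : 0 ≤ c * ‖w.2.2‖)]

lemma two_mul_lt_norm_Hinv_thd (ha : a ≠ 0) (hb : ‖b‖ = 1 + δ) (hδ : 0 < δ) (hR0 : 0 ≤ R)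
    (hR : 2 + 4 * ‖a‖ * (1 + δ) ≤ gain (1 + δ) * R ^ 2) (hw : w ∈ Vplus δ R) :
    2 * (1 + δ) * ‖w.2.2‖ < ‖(Hinv a b w).2.2‖ := by
  have hA : 0 < ‖a‖ := norm_pos_iff.mpr ha
  have hzR := ((mem_Vplus_iff (by linarith)).mp hw).1
  have hz : 0 < ‖w.2.2‖ := hR0.trans_lt hzR
  have hcubic := gain_mul_pow_three_le_of_mem_Vplus ha hb hδ hR0
    (by nlinarith [norm_nonneg a]) hw
  have hsq : gain (1 + δ) * R ^ 2 ≤ gain (1 + δ) * ‖w.2.2‖ ^ 2 :=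
    mul_le_mul_of_nonneg_left (pow_le_pow_left₀ hR0 hzR.le 2)
      (gain_pos (by linarith : 1 < 1 + δ)).le
  have hlin : (2 + 4 * ‖a‖ * (1 + δ)) * ‖w.2.2‖ ≤ gain (1 + δ) * ‖w.2.2‖ ^ 3 := by
    nlinarith [mul_le_mul_of_nonneg_right (hR.trans hsq) hz.le]
  nlinarith

lemma norm_Hinv_snd_le_of_mem_Vplus (hb : ‖b‖ = 1 + δ) (hδ : 0 ≤ δ) (hw : w ∈ Vplus δ R) :
    ‖(Hinv a b w).2.1‖ ≤ 2 * ‖w.2.2‖ ^ 2 := by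
  have hy := ((mem_Vplus_iff (by linarith)).mp hw).2.2
  have hy1 : ‖w.2.1‖ ≤ (1 + δ) ^ 2 * ‖w.2.1‖ :=
    le_mul_of_one_le_left (norm_nonneg _) (by nlinarith)
  exact norm_Hinv_snd_le (by linarith) (by linarith)

lemma mapsTo_Hinv_Vplus (ha : a ≠ 0) (hb : ‖b‖ = 1 + δ) (hδ : 0 < δ) (hR0 : 0 ≤ R)
    (hR : 2 + 4 * ‖a‖ * (1 + δ) ≤ gain (1 + δ) * R ^ 2) :
    Set.MapsTo (Hinv a b) (Vplus δ R) (Vplus δ R) := by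
  intro w hw
  have hgrow := two_mul_lt_norm_Hinv_thd ha hb hδ hR0 hR hw
  obtain ⟨hzR, hx, -⟩ := (mem_Vplus_iff (by linarith)).mp hw
  have hy' := norm_Hinv_snd_le_of_mem_Vplus (a := a) hb hδ.le hw
  have hz' : ‖w.2.2‖ < ‖(Hinv a b w).2.2‖ := by nlinarith
  refine (mem_Vplus_iff (by linarith)).mpr ⟨hzR.trans hz', hz', ?_⟩
  have hz : 0 < ‖w.2.2‖ := hR0.trans_lt hzR
  calc (1 + δ) ^ 2 * ‖(Hinv a b w).2.1‖ ≤ (1 + δ) ^ 2 * (2 * ‖w.2.2‖ ^ 2) :=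
        mul_le_mul_of_nonneg_left hy' (sq_nonneg _)
    _ < (2 * (1 + δ) * ‖w.2.2‖) ^ 2 := by
        nlinarith [mul_pos (pow_pos (by linarith : (0 : ℝ) < 1 + δ) 2) (pow_pos hz 2)]
    _ < ‖(Hinv a b w).2.2‖ ^ 2 := pow_lt_pow_left₀ hgrow (by positivity) two_ne_zero

end

theorem stmt3_general (a b : ℂ) (ha : a ≠ 0) (δ : ℝ) (hδ : 0 < δ)
    (hbδ : ‖b‖ = 1 + δ) :
    ∃ R₀ > (1 : ℝ), ∀ R > R₀, ∀ w ∈ Vplus δ R,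
      Tendsto (fun n : ℕ => ‖((Hinv a b)^[n] w).2.2‖) atTop atTop ∧
      Tendsto (fun n : ℕ => ((Hinv a b)^[n] w).1 / ((Hinv a b)^[n] w).2.2)
        atTop (nhds 0) ∧
      Tendsto (fun n : ℕ => ((Hinv a b)^[n] w).2.1 / ((Hinv a b)^[n] w).2.2)
        atTop (nhds 0) := by
  have hg : 0 < gain (1 + δ) := gain_pos (by linarith)
  have hC : 0 < (2 + 4 * ‖a‖ * (1 + δ)) / gain (1 + δ) := by positivity
  refine ⟨1 + (2 + 4 * ‖a‖ * (1 + δ)) / gain (1 + δ), by linarith, fun R hR w hw => ?_⟩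
  have hR0 : 0 ≤ R := by linarith
  have hRg : 2 + 4 * ‖a‖ * (1 + δ) ≤ gain (1 + δ) * R ^ 2 := by
    rw [← div_le_iff₀' hg]; nlinarith
  have horbit (n : ℕ) : (Hinv a b)^[n] w ∈ Vplus δ R :=
    (mapsTo_Hinv_Vplus ha hbδ hδ hR0 hRg).iterate n hw
  have hz_pos (n : ℕ) : 0 < ‖((Hinv a b)^[n] w).2.2‖ :=
    hR0.trans_lt ((mem_Vplus_iff (by linarith)).mp (horbit n)).1
  have hcubic (n : ℕ) := gain_mul_pow_three_le_of_mem_Vplus ha hbδ hδ hR0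
    (by nlinarith [norm_nonneg a]) (horbit n)
  have hz : Tendsto (fun n : ℕ => ‖((Hinv a b)^[n] w).2.2‖) atTop atTop := by
    refine tendsto_atTop_of_geom_le (hz_pos 0) one_lt_two fun n => ?_
    rw [Function.iterate_succ_apply']
    nlinarith [two_mul_lt_norm_Hinv_thd ha hbδ hδ hR0 hRg (horbit n), hz_pos n]
  refine ⟨hz, ?_, ?_⟩
  · rw [← tendsto_add_atTop_iff_nat 1]
    refine squeeze_zero_norm (fun n => ?_) ((tendsto_const_nhds (x := 2 * ‖a‖)).div_atTop
      (((tendsto_pow_atTop two_ne_zero).comp hz).const_mul_atTop hg))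
    rw [Function.iterate_succ_apply']
    exact norm_Hinv_fst_div_thd_le hg (hz_pos n) (hcubic n)
  · rw [← tendsto_add_atTop_iff_nat 1]
    refine squeeze_zero_norm (fun n => ?_)
      ((tendsto_const_nhds (x := 4 * ‖a‖)).div_atTop (hz.const_mul_atTop hg))
    rw [Function.iterate_succ_apply']
    exact norm_Hinv_snd_div_thd_le hg (hz_pos n) (hcubic n)
      (norm_Hinv_snd_le_of_mem_Vplus hbδ hδ.le (horbit n))

/-- there exists `R₀ > 1` such that for all `R > R₀` and every
`w ∈ V⁺`, writing `H⁻ⁿ(w) = (xₙ,yₙ,zₙ)`: `|zₙ| → ∞`, `xₙ/zₙ → 0` and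
`yₙ/zₙ → 0` as `n → ∞`; i.e. the backward orbit converges in `ℙ³` to
`[0:0:1:0]`. -/
theorem stmt3 (a b : ℂ) (ha : a ≠ 0) (hb : b ≠ 0) (δ : ℝ) (hδ : 0 < δ)
    (hbδ : ‖b‖ = 1 + δ) :
    ∃ R₀ > (1 : ℝ), ∀ R > R₀, ∀ w ∈ Vplus δ R,
      Tendsto (fun n : ℕ => ‖((Hinv a b)^[n] w).2.2‖) atTop atTop ∧
      Tendsto (fun n : ℕ => ((Hinv a b)^[n] w).1 / ((Hinv a b)^[n] w).2.2)
        atTop (nhds 0) ∧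
      Tendsto (fun n : ℕ => ((Hinv a b)^[n] w).2.1 / ((Hinv a b)^[n] w).2.2)
        atTop (nhds 0) :=
  stmt3_general a b ha δ hδ hbδ
end

section
/- There exist ε > 0 and R₀ > 1/ε¹⁰ such that for all R > R₀ (so that H(V⁻) ⊂ V⁻): the sets U⁺ and K⁺ are completely invariant under H, i.e. H(U⁺) = U⁺ and H(K⁺) = K⁺. -/
open Complex Filter Topology

/-- `V⁻ = {(x,y,z) : |xy| > max{R, 2|az|, |x|^{3/2}, (1/ε)|y|^{3/2}}}`. -/
noncomputable def Vminus (a : ℂ) (ε R : ℝ) : Set (ℂ × ℂ × ℂ) :=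
  {w | ‖w.1 * w.2.1‖ >
    max R (max (2 * ‖a * w.2.2‖)
      (max ((‖w.1‖) ^ ((3 : ℝ) / 2))
        ((1 / ε) * (‖w.2.1‖) ^ ((3 : ℝ) / 2))))}

/-- `U⁺ = ⋃_{n≥0} H⁻ⁿ(V⁻)`, i.e. the points whose forward orbit meets `V⁻`. -/
noncomputable def Uplus (a b : ℂ) (ε R : ℝ) : Set (ℂ × ℂ × ℂ) :=
  ⋃ n : ℕ, (H a b)^[n] ⁻¹' Vminus a ε R

/-- `K⁺ = ℂ³ \ U⁺`. -/
noncomputable def Kplus (a b : ℂ) (ε R : ℝ) : Set (ℂ × ℂ × ℂ) :=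
  (Uplus a b ε R)ᶜ

/-- `Mₙ = max{R, 2|azₙ|, |xₙ|^{3/2}, (1/ε)|yₙ|^{3/2}}` where `Hⁿ(w) = (xₙ,yₙ,zₙ)`. -/
noncomputable def Mseq (a b : ℂ) (ε R : ℝ) (w : ℂ × ℂ × ℂ) (n : ℕ) : ℝ :=
  max R (max (2 * ‖a * ((H a b)^[n] w).2.2‖)
    (max ((‖((H a b)^[n] w).1‖) ^ ((3 : ℝ) / 2))
      ((1 / ε) * (‖((H a b)^[n] w).2.1‖) ^ ((3 : ℝ) / 2))))

/-!
On `V⁻` the monomials `xy` and `x²` dominate the first two coordinates of `H`, and the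
inequalities defining `V⁻` (with `R ≥ ε⁻¹⁰`, `ε` small in terms of `|a|, |b|`) force
`ε|x| > 4` and `ε|y| > 4`; with these margins each defining inequality reproduces itself at
`H(x,y,z)`, so `H(V⁻) ⊆ V⁻`. Consequently `H⁻¹(U⁺) = U⁺`, hence `H⁻¹(K⁺) = K⁺`, and since `H`
is onto (`H ∘ H⁻¹ = id`), both sets equal their images.
-/

theorem Set.preimage_iUnion_preimage_iterate {α : Type*} {f : α → α} {s : Set α}
    (h : Set.MapsTo f s s) : f ⁻¹' ⋃ n : ℕ, f^[n] ⁻¹' s = ⋃ n : ℕ, f^[n] ⁻¹' s := by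
  refine Set.Subset.antisymm ?_ fun x hx => ?_
  · rintro x ⟨_, ⟨n, rfl⟩, hn⟩
    exact Set.mem_iUnion.2 ⟨n + 1, by simpa only [Set.mem_preimage, Function.iterate_succ_apply]⟩
  · obtain ⟨n, hn⟩ := Set.mem_iUnion.1 hx
    refine Set.mem_iUnion.2 ⟨n, ?_⟩
    simpa only [Set.mem_preimage, Function.Commute.iterate_self f n x] using h hn

theorem Set.image_eq_of_preimage_eq {α : Type*} {f : α → α} {s : Set α}
    (hf : Function.Surjective f) (h : f ⁻¹' s = s) : f '' s = s := by
  conv_lhs => rw [← h]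
  exact Set.image_preimage_eq s hf

theorem rightInverse_Hinv {a b : ℂ} (ha : a ≠ 0) (hb : b ≠ 0) :
    Function.RightInverse (Hinv a b) (H a b) := by
  rintro ⟨x, y, z⟩
  simp only [H, Hinv, Prod.mk.injEq]
  refine ⟨?_, ?_, trivial⟩ <;> field_simp <;> ring

theorem Real.rpow_three_halves_lt_mul_iff {s t : ℝ} (ht : 0 < t) (hs : 0 ≤ s) :
    t ^ ((3 : ℝ) / 2) < t * s ↔ t < s ^ 2 := by
  rw [show (3 : ℝ) / 2 = 1 + 1 / 2 by norm_num, Real.rpow_add ht, Real.rpow_one,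
    ← Real.sqrt_eq_rpow, mul_lt_mul_iff_right₀ ht, Real.sqrt_lt ht.le hs]

theorem mem_Vminus_iff {a : ℂ} {ε R : ℝ} (hε : 0 < ε) (hR : 0 ≤ R) {w : ℂ × ℂ × ℂ} :
    w ∈ Vminus a ε R ↔ R < ‖w.1‖ * ‖w.2.1‖ ∧ 2 * (‖a‖ * ‖w.2.2‖) < ‖w.1‖ * ‖w.2.1‖ ∧
      ‖w.1‖ < ‖w.2.1‖ ^ 2 ∧ ‖w.2.1‖ < (ε * ‖w.1‖) ^ 2 := by
  simp only [Vminus, Set.mem_ofPred_eq, gt_iff_lt, max_lt_iff, norm_mul]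
  refine and_congr_right fun hRxy => and_congr_right fun _ => ?_
  have hx : 0 < ‖w.1‖ := by
    by_contra! h; nlinarith [norm_nonneg w.1, norm_nonneg w.2.1]
  have hy : 0 < ‖w.2.1‖ := by
    by_contra! h; nlinarith [norm_nonneg w.1, norm_nonneg w.2.1]
  rw [Real.rpow_three_halves_lt_mul_iff hx (norm_nonneg _), one_div, inv_mul_lt_iff₀ hε,
    show ε * (‖w.1‖ * ‖w.2.1‖) = ‖w.2.1‖ * (ε * ‖w.1‖) by ring,
    Real.rpow_three_halves_lt_mul_iff hy (by positivity)]

section EscapeEstimates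

/- Real-variable form of `H(V⁻) ⊆ V⁻`: `X, Y, Z` stand for `|x|, |y|, |z|`, and `X', Y'` for the
moduli of the first two coordinates `xy + az`, `x² + by` of `H(x,y,z)`. -/

variable {ε R A B X Y Z X' Y' : ℝ}

theorem four_lt_mul_of_escape (hε : 0 < ε) (hε4 : ε ≤ 1 / 4) (hR : 1 / ε ^ 10 ≤ R)
    (hXY : R < X * Y) (hX : X < Y ^ 2) (hY : Y < (ε * X) ^ 2) (hX0 : 0 ≤ X) (hY0 : 0 ≤ Y) :
    4 < ε * X ∧ 4 < ε * Y := by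
  have hε10 : 0 < ε ^ 10 := by positivity
  have hcube : 1 < (ε ^ 4 * X) ^ 3 := calc
    1 ≤ ε ^ 10 * R := (div_le_iff₀' hε10).1 hR
    _ < ε ^ 10 * (X * Y) := mul_lt_mul_of_pos_left hXY hε10
    _ ≤ ε ^ 10 * (X * (ε * X) ^ 2) := by gcongr
    _ = (ε ^ 4 * X) ^ 3 := by ring
  have h4 : 1 < ε ^ 4 * X := (one_lt_pow_iff_of_nonneg (by positivity) (by norm_num)).1 hcube
  have hεX : 64 < ε * X := by
    have : ε ^ 3 * (ε * X) ≤ (1 / 4) ^ 3 * (ε * X) := by gcongr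
    nlinarith
  refine ⟨by linarith, lt_of_pow_lt_pow_left₀ 2 (by positivity) ?_⟩
  have : ε ^ 2 * (ε ^ 2 * X) ≤ (1 / 4) ^ 2 * (ε ^ 2 * X) := by gcongr
  calc (4 : ℝ) ^ 2 < ε ^ 2 * X := by nlinarith
    _ ≤ ε ^ 2 * Y ^ 2 := by gcongr
    _ = (ε * Y) ^ 2 := by ring

theorem escape_step (hε : 0 < ε) (hε4 : ε ≤ 1 / 4) (hA : 8 * A * ε ≤ 1) (hB : 2 * B * ε ≤ 1)
    (hR : 1 / ε ^ 10 ≤ R) (hXY : R < X * Y) (hZ : 2 * (A * Z) < X * Y) (hX : X < Y ^ 2)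
    (hY : Y < (ε * X) ^ 2) (hX0 : 0 ≤ X) (hY0 : 0 ≤ Y)
    (hX' : |X' - X * Y| ≤ A * Z) (hY' : |Y' - X ^ 2| ≤ B * Y) :
    R < X' * Y' ∧ 2 * (A * X) < X' * Y' ∧ X' < Y' ^ 2 ∧ Y' < (ε * X') ^ 2 := by
  obtain ⟨hεX, hεY⟩ := four_lt_mul_of_escape hε hε4 hR hXY hX hY hX0 hY0
  have hX16 : 16 < X := by nlinarith
  have hY16 : 16 < Y := by nlinarith
  have hBY : B * Y ≤ X ^ 2 / 2 := by
    rcases le_total B 0 with hB0 | hB0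
    · nlinarith
    · calc B * Y ≤ B * (ε * X) ^ 2 := by gcongr
        _ = (B * ε) * ε * X ^ 2 := by ring
        _ ≤ (1 / 2) * 1 * X ^ 2 := by gcongr <;> linarith
        _ ≤ X ^ 2 / 2 := by linarith
  obtain ⟨hX'lo, hX'hi⟩ : X * Y / 2 < X' ∧ X' < 3 * (X * Y) / 2 := by
    constructor <;> linarith [abs_le.1 hX']
  obtain ⟨hY'lo, hY'hi⟩ : X ^ 2 / 2 ≤ Y' ∧ Y' ≤ 3 * X ^ 2 / 2 := by
    constructor <;> linarith [abs_le.1 hY']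
  have hX'Y' : X * Y / 2 * (X ^ 2 / 2) < X' * Y' :=
    mul_lt_mul hX'lo hY'lo (by positivity) (by nlinarith)
  refine ⟨?_, ?_, ?_, ?_⟩
  · calc R < X * Y := hXY
      _ = X * Y / 2 * 2 := by ring
      _ ≤ X * Y / 2 * (X ^ 2 / 2) := by gcongr; nlinarith
      _ < X' * Y' := hX'Y'
  · have h8A : 8 * A < X := lt_of_mul_lt_mul_right (by linarith) hε.le
    have hXY1 : 1 ≤ X * Y := by nlinarith
    calc 2 * (A * X) = X * (8 * A) / 4 := by ring
      _ < X * X / 4 := by gcongr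
      _ ≤ X * Y / 2 * (X ^ 2 / 2) := by nlinarith [mul_le_mul_of_nonneg_left hXY1 (sq_nonneg X)]
      _ < X' * Y' := hX'Y'
  · have hε2 : 6 * ε ^ 2 < X := by nlinarith
    calc X' < 3 * (X * Y) / 2 := hX'hi
      _ ≤ 3 * (X * (ε * X) ^ 2) / 2 := by gcongr
      _ < (X ^ 2 / 2) ^ 2 := by
        nlinarith [mul_pos (pow_pos (by linarith : 0 < X) 3) (sub_pos.2 hε2)]
      _ ≤ Y' ^ 2 := by gcongr
  · have hεY2 : 16 < (ε * Y) ^ 2 := by nlinarith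
    calc Y' ≤ 3 * X ^ 2 / 2 := hY'hi
      _ < X ^ 2 * (ε * Y) ^ 2 / 4 := by
        nlinarith [mul_lt_mul_of_pos_left hεY2 (by positivity : 0 < X ^ 2)]
      _ = (ε * (X * Y / 2)) ^ 2 := by ring
      _ ≤ (ε * X') ^ 2 := by gcongr

end EscapeEstimates

theorem mapsTo_H_Vminus {a b : ℂ} {ε R : ℝ} (hε : 0 < ε) (hε4 : ε ≤ 1 / 4)
    (ha : 8 * ‖a‖ * ε ≤ 1) (hb : 2 * ‖b‖ * ε ≤ 1) (hR : 1 / ε ^ 10 ≤ R) :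
    Set.MapsTo (H a b) (Vminus a ε R) (Vminus a ε R) := by
  have hR0 : 0 ≤ R := le_trans (by positivity) hR
  rintro ⟨x, y, z⟩ hw
  rw [mem_Vminus_iff hε hR0] at hw ⊢
  obtain ⟨hXY, hZ, hX, hY⟩ := hw
  refine escape_step hε hε4 ha hb hR hXY hZ hX hY (norm_nonneg x) (norm_nonneg y) ?_ ?_
  · simpa [H, norm_mul] using abs_norm_sub_norm_le (x * y + a * z) (x * y)
  · have h := abs_norm_sub_norm_le (x ^ 2 + b * y) (x ^ 2)
    rwa [norm_pow, add_sub_cancel_left, norm_mul] at h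

/-- there exist `ε > 0` and `R₀ > 1/ε¹⁰` such that for all
`R > R₀`: `U⁺` and `K⁺` are completely invariant under `H`, i.e.
`H(U⁺) = U⁺` and `H(K⁺) = K⁺`. -/
theorem stmt9 (a b : ℂ) (ha : a ≠ 0) (hb : b ≠ 0) :
    ∃ ε > (0 : ℝ), ∃ R₀ > 1 / ε ^ 10, ∀ R > R₀,
      H a b '' Uplus a b ε R = Uplus a b ε R ∧
      H a b '' Kplus a b ε R = Kplus a b ε R := by
  set ε : ℝ := 1 / (8 * (‖a‖ + ‖b‖ + 1))
  have hε : 0 < ε := by positivity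
  have hεab : 8 * (‖a‖ + ‖b‖ + 1) * ε = 1 := by simp only [ε]; field_simp
  have hR₀ : 1 / ε ^ 10 < 2 / ε ^ 10 := div_lt_div_of_pos_right one_lt_two (by positivity)
  refine ⟨ε, hε, 2 / ε ^ 10, hR₀, fun R hR => ?_⟩
  have hV : Set.MapsTo (H a b) (Vminus a ε R) (Vminus a ε R) := by
    have := mul_nonneg hε.le (norm_nonneg a)
    have := mul_nonneg hε.le (norm_nonneg b)
    exact mapsTo_H_Vminus hε (by nlinarith) (by nlinarith) (by nlinarith) (by linarith)
  have hU : H a b ⁻¹' Uplus a b ε R = Uplus a b ε R := Set.preimage_iUnion_preimage_iterate hV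
  have hH := (rightInverse_Hinv ha hb).surjective
  exact ⟨Set.image_eq_of_preimage_eq hH hU,
    Set.image_eq_of_preimage_eq hH (by rw [Kplus, Set.preimage_compl, hU])⟩
end
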